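/- Let m ≥ 1 be a natural number and let f : ℂ → ℂ be smooth (C^∞ over ℝ) on the open unit disk D. Then for every z ∈ D, D̄^{∘m} f(z) = (1−|z|²)^{m+1} · ∂̄^{∘m}[w ↦ (1−|w|²)^{m−1}·f(w)](z), where ∂̄^{∘m} denotes the m-fold iterate of the operator f ↦ ∂̄f on functions ℂ → ℂ. -/

import Mathlib

open Complex

/-- The Wirtinger derivative `∂̄f(z) = (1/2)(L(1) + i·L(i))`, `L = fderiv ℝ f z`,
viewed as an operator on functions `ℂ → ℂ`. -/
noncomputable def wirtingerBar : (ℂ → ℂ) → (ℂ → ℂ) :=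
  fun f z => (1 / 2) * ((fderiv ℝ f z) 1 + Complex.I * (fderiv ℝ f z) Complex.I)

/-- The invariant Cauchy–Riemann operator of the unit disk: `(D̄f)(z) = (1−|z|²)²·∂̄f(z)`. -/
noncomputable def invCR : (ℂ → ℂ) → (ℂ → ℂ) :=
  fun f z => ((1 - ‖z‖ ^ 2 : ℝ) : ℂ) ^ 2 * wirtingerBar f z

/-- The weight function `φ(w) = 1 − |w|²`. -/
noncomputable def phi : ℂ → ℂ := fun w => ((1 - ‖w‖ ^ 2 : ℝ) : ℂ)

lemma phi_eq : phi = fun w => 1 - w * (starRingEnd ℂ) w := by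
  funext w
  simp [phi, Complex.mul_conj, Complex.normSq_eq_norm_sq]

lemma contDiff_phi : ContDiff ℝ (⊤ : ℕ∞) phi := by
  rw [phi_eq]
  exact contDiff_const.sub (contDiff_id.mul Complex.conjCLE.contDiff)

lemma fderiv_phi_apply (z v : ℂ) :
    fderiv ℝ phi z v = -(v * (starRingEnd ℂ) z + z * (starRingEnd ℂ) v) := by
  have h1 : HasFDerivAt (fun w : ℂ => w * (starRingEnd ℂ) w)
      (z • (Complex.conjCLE : ℂ →L[ℝ] ℂ) + ((starRingEnd ℂ) z) • ContinuousLinearMap.id ℝ ℂ) z := by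
    have := (hasFDerivAt_id z).mul (Complex.conjCLE.hasFDerivAt (x := z))
    simp only [id_eq, Complex.conjCLE_apply] at this
    exact this
  have h2 : HasFDerivAt phi
      (-(z • (Complex.conjCLE : ℂ →L[ℝ] ℂ) + ((starRingEnd ℂ) z) • ContinuousLinearMap.id ℝ ℂ)) z := by
    rw [phi_eq]
    have := (hasFDerivAt_const (1:ℂ) z).sub h1
    simp only [zero_sub] at this
    exact this
  rw [h2.fderiv]
  simp [smul_eq_mul]
  ring

lemma wbar_phi (z : ℂ) : wirtingerBar phi z = -z := by
  simp only [wirtingerBar, fderiv_phi_apply, map_one, Complex.conj_I]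
  ring_nf
  rw [Complex.I_sq]
  ring

lemma wbar_congr {f g : ℂ → ℂ} {z : ℂ} (h : f =ᶠ[nhds z] g) :
    wirtingerBar f z = wirtingerBar g z := by
  simp only [wirtingerBar, h.fderiv_eq]

lemma wbar_mul {u v : ℂ → ℂ} {z : ℂ} (hu : DifferentiableAt ℝ u z)
    (hv : DifferentiableAt ℝ v z) :
    wirtingerBar (fun w => u w * v w) z = u z * wirtingerBar v z + v z * wirtingerBar u z := by
  simp only [wirtingerBar, fderiv_fun_mul hu hv, ContinuousLinearMap.add_apply,
    ContinuousLinearMap.smul_apply, smul_eq_mul]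
  ring

lemma wbar_const (c : ℂ) (z : ℂ) : wirtingerBar (fun _ => c) z = 0 := by
  simp [wirtingerBar]

lemma wbar_id (z : ℂ) : wirtingerBar (fun w => w) z = 0 := by
  simp only [wirtingerBar, fderiv_id']
  simp [Complex.I_mul_I]

lemma wbar_sub {u v : ℂ → ℂ} {z : ℂ} (hu : DifferentiableAt ℝ u z)
    (hv : DifferentiableAt ℝ v z) :
    wirtingerBar (fun w => u w - v w) z = wirtingerBar u z - wirtingerBar v z := by
  simp only [wirtingerBar, fderiv_fun_sub hu hv, ContinuousLinearMap.sub_apply]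
  ring

lemma wbar_const_mul {v : ℂ → ℂ} {z : ℂ} (c : ℂ) (hv : DifferentiableAt ℝ v z) :
    wirtingerBar (fun w => c * v w) z = c * wirtingerBar v z := by
  rw [wbar_mul (differentiableAt_const c) hv, wbar_const]
  ring

lemma wbar_pow {u : ℂ → ℂ} {z : ℂ} (hu : DifferentiableAt ℝ u z) (n : ℕ) :
    wirtingerBar (fun w => u w ^ (n + 1)) z = (n + 1) * u z ^ n * wirtingerBar u z := by
  induction n with
  | zero => simp only [pow_one, zero_add, pow_zero]; ring_nf
  | succ n ih =>
    have h : (fun w => u w ^ (n + 2)) = fun w => u w * u w ^ (n + 1) := by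
      funext w; ring
    rw [h, wbar_mul hu (hu.fun_pow (n+1)), ih]
    push_cast
    ring

lemma wbar_contDiffOn {g : ℂ → ℂ} {s : Set ℂ} (hs : IsOpen s) (hg : ContDiffOn ℝ (⊤ : ℕ∞) g s) :
    ContDiffOn ℝ (⊤ : ℕ∞) (wirtingerBar g) s := by
  have h1 : ContDiffOn ℝ (⊤ : ℕ∞) (fun z => fderiv ℝ g z) s := hg.fderiv_of_isOpen hs (by simp)
  have h2 : ∀ v : ℂ, ContDiffOn ℝ (⊤ : ℕ∞) (fun z => fderiv ℝ g z v) s := fun v =>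
    (ContinuousLinearMap.apply ℝ ℂ v).contDiff.comp_contDiffOn h1
  exact contDiffOn_const.mul ((h2 1).add (contDiffOn_const.mul (h2 Complex.I)))

lemma wbar_iter_contDiffOn {g : ℂ → ℂ} {s : Set ℂ} (hs : IsOpen s)
    (hg : ContDiffOn ℝ (⊤ : ℕ∞) g s) (k : ℕ) : ContDiffOn ℝ (⊤ : ℕ∞) (wirtingerBar^[k] g) s := by
  induction k with
  | zero => exact hg
  | succ k ih => rw [Function.iterate_succ_apply']; exact wbar_contDiffOn hs ih

lemma diffAt_of_contDiffOn {g : ℂ → ℂ} {s : Set ℂ} {z : ℂ} (hs : IsOpen s)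
    (hg : ContDiffOn ℝ (⊤ : ℕ∞) g s) (hz : z ∈ s) : DifferentiableAt ℝ g z :=
  (hg.contDiffAt (hs.mem_nhds hz)).differentiableAt (by simp)

/-- Leibniz-type rule for iterates of `∂̄` applied to `φ·g`, on the unit ball. -/
lemma wbar_iter_phi_mul {g : ℂ → ℂ} (hg : ContDiffOn ℝ (⊤ : ℕ∞) g (Metric.ball (0 : ℂ) 1)) :
    ∀ k : ℕ, ∀ z ∈ Metric.ball (0 : ℂ) 1,
      wirtingerBar^[k] (fun w => phi w * g w) z
        = phi z * wirtingerBar^[k] g z - (k : ℂ) * z * wirtingerBar^[k - 1] g z := by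
  have hB : IsOpen (Metric.ball (0 : ℂ) 1) := Metric.isOpen_ball
  intro k
  induction k with
  | zero => intro z hz; simp
  | succ k ih =>
    intro z hz
    have hGk : ContDiffOn ℝ (⊤ : ℕ∞) (wirtingerBar^[k] g) (Metric.ball (0 : ℂ) 1) :=
      wbar_iter_contDiffOn hB hg k
    have hGk1 : ContDiffOn ℝ (⊤ : ℕ∞) (wirtingerBar^[k - 1] g) (Metric.ball (0 : ℂ) 1) :=
      wbar_iter_contDiffOn hB hg (k - 1)
    have hphi : DifferentiableAt ℝ phi z := (contDiff_phi.differentiable (by simp)) z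
    have hGkz : DifferentiableAt ℝ (wirtingerBar^[k] g) z := diffAt_of_contDiffOn hB hGk hz
    have hGk1z : DifferentiableAt ℝ (wirtingerBar^[k - 1] g) z := diffAt_of_contDiffOn hB hGk1 hz
    have hidz : DifferentiableAt ℝ (fun w : ℂ => w) z := differentiableAt_fun_id
    have hev : wirtingerBar^[k] (fun w => phi w * g w) =ᶠ[nhds z]
        (fun w => phi w * wirtingerBar^[k] g w
          - (k : ℂ) * (w * wirtingerBar^[k - 1] g w)) := by
      filter_upwards [hB.mem_nhds hz] with w hw
      rw [ih w hw]; ring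
    rw [Function.iterate_succ_apply', wbar_congr hev,
      wbar_sub (hphi.fun_mul hGkz) ((differentiableAt_const _).fun_mul (hidz.fun_mul hGk1z)),
      wbar_mul hphi hGkz, wbar_const_mul _ (hidz.fun_mul hGk1z),
      wbar_mul hidz hGk1z, wbar_phi, wbar_id,
      ← Function.iterate_succ_apply' wirtingerBar k g]
    rcases Nat.eq_zero_or_pos k with hk | hk
    · subst hk; simp; ring
    · rw [Nat.succ_sub_one, ← Function.iterate_succ_apply' wirtingerBar (k-1) g]
      simp only [Nat.succ_eq_add_one, Nat.sub_add_cancel hk]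
      push_cast
      ring

/-- For `m ≥ 1` and `f` smooth on the unit disk,
`D̄^{∘m} f(z) = (1−|z|²)^{m+1} · ∂̄^{∘m}[w ↦ (1−|w|²)^{m−1}·f(w)](z)` on the disk. -/
theorem invCR_iterate_eq_weighted_wirtingerBar_iterate (m : ℕ) (hm : 1 ≤ m) (f : ℂ → ℂ)
    (hf : ContDiffOn ℝ (⊤ : ℕ∞) f (Metric.ball (0 : ℂ) 1))
    (z : ℂ) (hz : z ∈ Metric.ball (0 : ℂ) 1) :
    invCR^[m] f z
      = ((1 - ‖z‖ ^ 2 : ℝ) : ℂ) ^ (m + 1)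
        * wirtingerBar^[m] (fun w : ℂ => ((1 - ‖w‖ ^ 2 : ℝ) : ℂ) ^ (m - 1) * f w) z := by
  have hB : IsOpen (Metric.ball (0 : ℂ) 1) := Metric.isOpen_ball
  induction m, hm using Nat.le_induction generalizing z with
  | base =>
    show invCR f z = phi z ^ 2 * wirtingerBar^[1] (fun w => phi w ^ (1 - 1) * f w) z
    have h : (fun w : ℂ => phi w ^ (1 - 1) * f w) = f := by funext w; simp
    rw [h, Function.iterate_one]
    rfl
  | succ m hm ih =>
    obtain ⟨n, rfl⟩ : ∃ n, m = n + 1 := ⟨m - 1, (Nat.succ_pred_eq_of_pos hm).symm⟩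
    set g : ℂ → ℂ := fun w => phi w ^ n * f w with hg_def
    have hg : ContDiffOn ℝ (⊤ : ℕ∞) g (Metric.ball (0 : ℂ) 1) :=
      ((contDiff_phi.pow _).contDiffOn).mul hf
    have hGm : ContDiffOn ℝ (⊤ : ℕ∞) (wirtingerBar^[n + 1] g) (Metric.ball (0 : ℂ) 1) :=
      wbar_iter_contDiffOn hB hg (n + 1)
    have hGmz : DifferentiableAt ℝ (wirtingerBar^[n + 1] g) z := diffAt_of_contDiffOn hB hGm hz
    have hphi : DifferentiableAt ℝ phi z := (contDiff_phi.differentiable (by simp)) z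
    have hev : invCR^[n + 1] f =ᶠ[nhds z]
        (fun w => phi w ^ (n + 2) * wirtingerBar^[n + 1] g w) := by
      filter_upwards [hB.mem_nhds hz] with w hw
      exact ih w hw
    have hstep : invCR^[n + 2] f z
        = phi z ^ 2 * wirtingerBar (fun w => phi w ^ (n + 2) * wirtingerBar^[n + 1] g w) z := by
      rw [Function.iterate_succ_apply']
      show phi z ^ 2 * wirtingerBar (invCR^[n + 1] f) z = _
      rw [wbar_congr hev]
    have hfun : (fun w : ℂ => phi w ^ (n + 1) * f w) = fun w => phi w * g w := by
      funext w; rw [hg_def]; ring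
    have hleib := wbar_iter_phi_mul hg (n + 2) z hz
    have e1 : n + 2 - 1 = n + 1 := rfl
    rw [e1] at hleib
    show invCR^[n + 2] f z
      = phi z ^ (n + 3) * wirtingerBar^[n + 2] (fun w => phi w ^ (n + 1) * f w) z
    rw [hstep, wbar_mul (hphi.fun_pow (n + 2)) hGmz, wbar_pow hphi (n + 1), wbar_phi,
      ← Function.iterate_succ_apply' wirtingerBar (n + 1) g, hfun, hleib]
    push_cast
    ring
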